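/- arXiv:1803.07254 — 9 statements merged into one kernel-verified Lean document; each statement's English description precedes it below -/
import Mathlib

section
/- Let 𝒞 be an abelian category and let w be an admissible class of morphisms of 𝒞. Given a monomorphism j : x → z, a morphism g : x → y, a monomorphism j' : x' → z', a morphism g' : x' → y', and morphisms a : x → x', b : y → y', c : z → z', all three of a, b, c lying in w, such that b∘g = g'∘a and c∘j = j'∘a, the induced morphism on pushouts b ⊔_a c : y ⊔_x z → y' ⊔_{x'} z' also lies in w. (In particular, an admissible class of morphisms satisfies Waldhausen's gluing axiom.) -/
open CategoryTheory CategoryTheory.Limits ZeroObject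

universe v u

/-- An *admissible class* of morphisms in an abelian category: it contains all
isomorphisms, satisfies the two-out-of-three property, and in any morphism of
short exact sequences, if two of the three vertical morphisms lie in the class
then so does the third. -/
structure AdmissibleClass {C : Type u} [Category.{v} C] [Abelian C]
    (w : MorphismProperty C) : Prop where
  of_isIso : ∀ {x y : C} (f : x ⟶ y), IsIso f → w f
  comp_mem : ∀ {x y z : C} (f : x ⟶ y) (g : y ⟶ z), w f → w g → w (f ≫ g)
  of_comp_left : ∀ {x y z : C} (f : x ⟶ y) (g : y ⟶ z), w g → w (f ≫ g) → w f
  of_comp_right : ∀ {x y z : C} (f : x ⟶ y) (g : y ⟶ z), w f → w (f ≫ g) → w g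
  ses_fst : ∀ {S₁ S₂ : ShortComplex C}, S₁.ShortExact → S₂.ShortExact →
    ∀ (φ : S₁ ⟶ S₂), w φ.τ₂ → w φ.τ₃ → w φ.τ₁
  ses_snd : ∀ {S₁ S₂ : ShortComplex C}, S₁.ShortExact → S₂.ShortExact →
    ∀ (φ : S₁ ⟶ S₂), w φ.τ₁ → w φ.τ₃ → w φ.τ₂
  ses_trd : ∀ {S₁ S₂ : ShortComplex C}, S₁.ShortExact → S₂.ShortExact →
    ∀ (φ : S₁ ⟶ S₂), w φ.τ₁ → w φ.τ₂ → w φ.τ₃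

/-- A *`w`-Serre subcategory* of an abelian category `C`, encoded as the set of
its objects: it is closed under isomorphisms, in any short exact sequence if
two of the three terms belong to it then so does the third, and it is
`w`-closed (closed under sources and targets of morphisms of `w`, hence under
finite zig-zags of morphisms of `w`). -/
structure IsWSerre {C : Type u} [Category.{v} C] [Abelian C]
    (w : MorphismProperty C) (S : Set C) : Prop where
  iso_closed : ∀ {x y : C}, (x ≅ y) → x ∈ S → y ∈ S
  ses_fst : ∀ {T : ShortComplex C}, T.ShortExact → T.X₂ ∈ S → T.X₃ ∈ S → T.X₁ ∈ S
  ses_snd : ∀ {T : ShortComplex C}, T.ShortExact → T.X₁ ∈ S → T.X₃ ∈ S → T.X₂ ∈ S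
  ses_trd : ∀ {T : ShortComplex C}, T.ShortExact → T.X₁ ∈ S → T.X₂ ∈ S → T.X₃ ∈ S
  w_src : ∀ {x y : C} (f : x ⟶ y), w f → y ∈ S → x ∈ S
  w_tgt : ∀ {x y : C} (f : x ⟶ y), w f → x ∈ S → y ∈ S

/-- The pair `(C, w)` satisfies the *factorization axiom*: every morphism `f`
factors as a monomorphism (cofibration) followed by a morphism of `w`. -/
def HasFactorizations {C : Type u} [Category.{v} C] [Abelian C]
    (w : MorphismProperty C) : Prop :=
  ∀ {x y : C} (f : x ⟶ y),
    ∃ (u : C) (i : x ⟶ u) (p : u ⟶ y), Mono i ∧ w p ∧ i ≫ p = f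

/-- The class `w_S` of *`S`-weak equivalences*: morphisms admitting a
factorization as a monomorphism `i` followed by a morphism of `w`, with
`coker i` in `S`. -/
def SWeq {C : Type u} [Category.{v} C] [Abelian C]
    (w : MorphismProperty C) (S : Set C) : MorphismProperty C :=
  fun x y f =>
    ∃ (u : C) (i : x ⟶ u) (p : u ⟶ y),
      Mono i ∧ w p ∧ i ≫ p = f ∧ cokernel i ∈ S

/-- `C^u`: the full subcategory (set of objects) of those `x` such that the
morphism `0 ⟶ x` lies in `u`. -/
def objectsOf {C : Type u} [Category.{v} C] [Abelian C]
    (u : MorphismProperty C) : Set C :=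
  {x : C | u (0 : (0 : C) ⟶ x)}

/-! A pushout square `x → y, z → y ⊔ₓ z` with `x ↪ z` mono is the same as the short exact
sequence `0 → x → y ⊞ z → y ⊔ₓ z → 0`, and a map of pushout squares is a map of these short
exact sequences whose middle component is `b ⊞ c`. Since `b ⊞ c` is itself the middle map of
a morphism of split short exact sequences `y → y ⊞ z → z`, it lies in `w`; two-out-of-three
for short exact sequences then puts the map of pushouts in `w`. -/

namespace CategoryTheory

variable {C : Type*} [Category C] [Abelian C]

lemma IsPushout.shortExact_shortComplex {X₁ X₂ X₃ X₄ : C} {f : X₁ ⟶ X₂} {g : X₁ ⟶ X₃}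
    {inl : X₂ ⟶ X₄} {inr : X₃ ⟶ X₄} (h : IsPushout f g inl inr) [Mono g] :
    h.shortComplex.ShortExact := by
  have hf : Mono (biprod.lift f (-g)) := by
    have : Mono (biprod.lift f (-g) ≫ biprod.snd) := by
      rw [biprod.lift_snd]
      infer_instance
    exact mono_of_mono _ biprod.snd
  exact .mk' (ShortComplex.exact_of_g_is_cokernel _ h.isColimitCokernelCofork) hf
    h.epi_shortComplex_g

noncomputable def CommSq.shortComplexMap {X₁ X₂ X₃ X₄ Y₁ Y₂ Y₃ Y₄ : C}
    {f : X₁ ⟶ X₂} {g : X₁ ⟶ X₃} {inl : X₂ ⟶ X₄} {inr : X₃ ⟶ X₄}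
    {f' : Y₁ ⟶ Y₂} {g' : Y₁ ⟶ Y₃} {inl' : Y₂ ⟶ Y₄} {inr' : Y₃ ⟶ Y₄}
    (sq : CommSq f g inl inr) (sq' : CommSq f' g' inl' inr')
    (τ₁ : X₁ ⟶ Y₁) (τ₂ : X₂ ⟶ Y₂) (τ₃ : X₃ ⟶ Y₃) (τ₄ : X₄ ⟶ Y₄)
    (hf : f ≫ τ₂ = τ₁ ≫ f') (hg : g ≫ τ₃ = τ₁ ≫ g')
    (hinl : inl ≫ τ₄ = τ₂ ≫ inl') (hinr : inr ≫ τ₄ = τ₃ ≫ inr') :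
    sq.shortComplex ⟶ sq'.shortComplex where
  τ₁ := τ₁
  τ₂ := biprod.map τ₂ τ₃
  τ₃ := τ₄
  comm₁₂ := by apply biprod.hom_ext <;> simp [hf, hg, CommSq.shortComplex]
  comm₂₃ := by apply biprod.hom_ext' <;> simp [hinl, hinr, CommSq.shortComplex]

end CategoryTheory

namespace AdmissibleClass

variable {C : Type*} [Category C] [Abelian C] {w : MorphismProperty C}

lemma biprod_map (hw : AdmissibleClass w) {y z y' z' : C} {b : y ⟶ y'} {c : z ⟶ z'}
    (hb : w b) (hc : w c) : w (biprod.map b c) :=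
  hw.ses_snd (ShortComplex.Splitting.ofHasBinaryBiproduct y z).shortExact
    (ShortComplex.Splitting.ofHasBinaryBiproduct y' z').shortExact
    { τ₁ := b, τ₂ := biprod.map b c, τ₃ := c } hb hc

lemma of_isPushout (hw : AdmissibleClass w) {X₁ X₂ X₃ X₄ Y₁ Y₂ Y₃ Y₄ : C}
    {f : X₁ ⟶ X₂} {g : X₁ ⟶ X₃} {inl : X₂ ⟶ X₄} {inr : X₃ ⟶ X₄}
    {f' : Y₁ ⟶ Y₂} {g' : Y₁ ⟶ Y₃} {inl' : Y₂ ⟶ Y₄} {inr' : Y₃ ⟶ Y₄}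
    (h : IsPushout f g inl inr) (h' : IsPushout f' g' inl' inr') [Mono g] [Mono g']
    {τ₁ : X₁ ⟶ Y₁} {τ₂ : X₂ ⟶ Y₂} {τ₃ : X₃ ⟶ Y₃} (τ₄ : X₄ ⟶ Y₄)
    (hf : f ≫ τ₂ = τ₁ ≫ f') (hg : g ≫ τ₃ = τ₁ ≫ g')
    (hinl : inl ≫ τ₄ = τ₂ ≫ inl') (hinr : inr ≫ τ₄ = τ₃ ≫ inr')
    (h₁ : w τ₁) (h₂ : w τ₂) (h₃ : w τ₃) : w τ₄ :=
  hw.ses_trd h.shortExact_shortComplex h'.shortExact_shortComplex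
    (h.shortComplexMap h'.toCommSq τ₁ τ₂ τ₃ τ₄ hf hg hinl hinr) h₁ (hw.biprod_map h₂ h₃)

end AdmissibleClass

theorem gluing_axiom_of_admissible {C : Type u} [Category.{v} C] [Abelian C]
    {w : MorphismProperty C} (hw : AdmissibleClass w)
    {x y z x' y' z' : C}
    (j : x ⟶ z) (g : x ⟶ y) (j' : x' ⟶ z') (g' : x' ⟶ y')
    (_ : Mono j) (_ : Mono j')
    (a : x ⟶ x') (b : y ⟶ y') (c : z ⟶ z')
    (ha : w a) (hb : w b) (hc : w c)
    (h₁ : g ≫ b = a ≫ g') (h₂ : j ≫ c = a ≫ j') :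
    w (pushout.map g j g' j' b c a h₁ h₂) :=
  hw.of_isPushout (.of_hasPushout g j) (.of_hasPushout g' j') _ h₁ h₂
    (pushout.inl_desc _ _ _) (pushout.inr_desc _ _ _) ha hb hc
end

section
/- Let 𝒞 be an abelian category, w an admissible class of morphisms of 𝒞 such that (𝒞, w) satisfies the factorization axiom, and S a w-Serre subcategory of 𝒞. Suppose given monomorphisms i : x → z and i' : x → z' and morphisms p : z → y and p' : z' → y, both p and p' lying in w, such that p∘i = p'∘i'. Then coker(i) lies in S if and only if coker(i') lies in S. -/
open CategoryTheory CategoryTheory.Limits ZeroObject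

universe v u


/-!
If `j ∈ w` and `i`, `i ≫ j` are monomorphisms, admissibility applied to the map of cokernel
sequences puts the induced map `coker i ⟶ coker (i ≫ j)` in `w`, so by `w`-closedness the two
cokernels lie in `S` together. To compare `i` with `i'`, factor the map out of the pushout of
`i` and `i'` as a monomorphism `k` followed by `r ∈ w`: the two legs into the source of `r`
lie in `w` by two-out-of-three, and `i`, `i'` become equal after composing with them.
-/

variable {C : Type u} [Category.{v} C] [Abelian C]

lemma shortExact_cokernel {x z : C} (i : x ⟶ z) [Mono i] :
    (ShortComplex.mk i (cokernel.π i) (cokernel.condition i)).ShortExact :=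
  .mk' (ShortComplex.exact_of_g_is_cokernel _ (cokernelIsCokernel i)) inferInstance inferInstance

namespace AdmissibleClass

variable {w : MorphismProperty C}

lemma id_mem (hw : AdmissibleClass w) (x : C) : w (𝟙 x) :=
  hw.of_isIso _ inferInstance

lemma cokernel_map_mem (hw : AdmissibleClass w) {x z x' z' : C} (i : x ⟶ z) (i' : x' ⟶ z')
    [Mono i] [Mono i'] (f : x ⟶ x') (g : z ⟶ z') (sq : i ≫ g = f ≫ i') (hf : w f) (hg : w g) :
    w (cokernel.map i i' f g sq) :=
  hw.ses_trd (shortExact_cokernel i) (shortExact_cokernel i')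
    { τ₁ := f, τ₂ := g, τ₃ := cokernel.map i i' f g sq } hf hg

end AdmissibleClass

lemma IsWSerre.mem_iff_of_hom {w : MorphismProperty C} {S : Set C} (hS : IsWSerre w S)
    {x y : C} {f : x ⟶ y} (hf : w f) : x ∈ S ↔ y ∈ S :=
  ⟨hS.w_tgt f hf, hS.w_src f hf⟩

lemma cokernel_mem_iff_of_comp_eq {w : MorphismProperty C} (hw : AdmissibleClass w)
    {S : Set C} (hS : IsWSerre w S) {x z z' u : C} (i : x ⟶ z) (i' : x ⟶ z')
    (j : z ⟶ u) (j' : z' ⟶ u) [Mono i] [Mono i'] [Mono (i ≫ j)]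
    (hj : w j) (hj' : w j') (heq : i ≫ j = i' ≫ j') :
    cokernel i ∈ S ↔ cokernel i' ∈ S := by
  have : Mono (i' ≫ j') := heq ▸ inferInstance
  calc cokernel i ∈ S ↔ cokernel (i ≫ j) ∈ S :=
        hS.mem_iff_of_hom (hw.cokernel_map_mem _ _ (𝟙 x) j (by simp) (hw.id_mem x) hj)
    _ ↔ cokernel (i' ≫ j') ∈ S := by rw [heq]
    _ ↔ cokernel i' ∈ S :=
        (hS.mem_iff_of_hom (hw.cokernel_map_mem _ _ (𝟙 x) j' (by simp) (hw.id_mem x) hj')).symm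

theorem cokernel_mem_iff_of_factorizations {C : Type u} [Category.{v} C] [Abelian C]
    {w : MorphismProperty C} (hw : AdmissibleClass w)
    (hfac : HasFactorizations w)
    {S : Set C} (hS : IsWSerre w S)
    {x z z' y : C} (i : x ⟶ z) (i' : x ⟶ z') (p : z ⟶ y) (p' : z' ⟶ y)
    (hi : Mono i) (hi' : Mono i') (hp : w p) (hp' : w p')
    (hcomm : i ≫ p = i' ≫ p') :
    cokernel i ∈ S ↔ cokernel i' ∈ S := by
  obtain ⟨u, k, r, hk, hr, hkr⟩ := hfac (pushout.desc p p' hcomm)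
  have hj : w (pushout.inl i i' ≫ k) :=
    hw.of_comp_left _ r hr (by rwa [Category.assoc, hkr, pushout.inl_desc])
  have hj' : w (pushout.inr i i' ≫ k) :=
    hw.of_comp_left _ r hr (by rwa [Category.assoc, hkr, pushout.inr_desc])
  exact cokernel_mem_iff_of_comp_eq hw hS i i' _ _ hj hj' (pushout.condition_assoc k)
end

section
/- Let 𝒞 be an abelian category, w an admissible class of morphisms of 𝒞 such that (𝒞, w) satisfies the factorization axiom, and S a w-Serre subcategory of 𝒞. Then 𝒞^{w_S} = S; that is, an object x of 𝒞 lies in S if and only if the unique morphism 0 → x is an S-weak equivalence. -/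
open CategoryTheory CategoryTheory.Limits ZeroObject

universe v u

theorem objectsOf_sWeq {C : Type u} [Category.{v} C] [Abelian C]
    {w : MorphismProperty C} (hw : AdmissibleClass w)
    (hfac : HasFactorizations w)
    {S : Set C} (hS : IsWSerre w S) :
    objectsOf (SWeq w S) = S := by
  ext x
  constructor
  · rintro ⟨u, i, p, hi, hp, hip, hcok⟩
    have hi0 : i = 0 := (isZero_zero C).eq_of_src i 0
    have : u ∈ S := by
      refine hS.iso_closed ?_ hcok
      refine (cokernelIsoOfEq hi0).trans cokernelZeroIsoTarget
    exact hS.w_tgt p hp this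
  · intro hx
    obtain ⟨u, i, p, hi, hp, hip⟩ := hfac (0 : (0 : C) ⟶ x)
    refine ⟨u, i, p, hi, hp, hip, ?_⟩
    have hu : u ∈ S := hS.w_src p hp hx
    have hi0 : i = 0 := (isZero_zero C).eq_of_src i 0
    exact hS.iso_closed ((cokernelIsoOfEq hi0).trans cokernelZeroIsoTarget).symm hu
end

section
/- Let 𝒞 be an abelian category, w an admissible class of morphisms of 𝒞 such that (𝒞, w) satisfies the factorization axiom, and u an admissible class of morphisms of 𝒞 containing w. Then w_{𝒞^u} = u; that is, a morphism f of 𝒞 lies in u if and only if f is a 𝒞^u-weak equivalence (here 𝒞^u is a w-Serre subcategory of 𝒞, so 𝒞^u-weak equivalences are defined). -/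
open CategoryTheory CategoryTheory.Limits ZeroObject

universe v u

/-! A monomorphism `i : x ⟶ y` is compared with the identity of `x` through the morphism of
short exact sequences `(x = x ⟶ 0) ⟶ (x ⟶ y ⟶ coker i)` with components `𝟙 x`, `i` and
`0 ⟶ coker i`. Since `𝟙 x` lies in any admissible class `u`, the other two components lie in `u`
together, i.e. `u i ↔ coker i ∈ C^u`. Hence a factorization `f = i ≫ p` with `p ∈ w ⊆ u` has
`coker i ∈ C^u` exactly when `f ∈ u`, and such factorizations always exist. -/

namespace CategoryTheory.ShortComplex

variable {C : Type u} [Category.{v} C] [Abelian C]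

noncomputable def idZeroSequence (x : C) : ShortComplex C :=
  ShortComplex.mk (𝟙 x) (0 : x ⟶ 0) (by simp)

lemma idZeroSequence_shortExact (x : C) : (idZeroSequence x).ShortExact :=
  (Splitting.ofIsIsoOfIsZero _ (inferInstanceAs (IsIso (𝟙 x))) (isZero_zero C)).shortExact

lemma cokernelSequence_shortExact {x y : C} (i : x ⟶ y) [Mono i] :
    (cokernelSequence i).ShortExact :=
  ShortExact.mk' (cokernelSequence_exact i) (inferInstanceAs (Mono i)) inferInstance

noncomputable def idZeroSequenceToCokernelSequence {x y : C} (i : x ⟶ y) :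
    idZeroSequence x ⟶ cokernelSequence i where
  τ₁ := 𝟙 x
  τ₂ := i
  τ₃ := 0
  comm₂₃ := (cokernel.condition i).trans zero_comp.symm

end CategoryTheory.ShortComplex

open CategoryTheory.ShortComplex in
theorem AdmissibleClass.mem_iff_cokernel_mem_objectsOf {C : Type u} [Category.{v} C]
    [Abelian C] {u : MorphismProperty C} (hu : AdmissibleClass u) {x y : C} (i : x ⟶ y)
    [Mono i] : u i ↔ cokernel i ∈ objectsOf u := by
  have hid : u (idZeroSequenceToCokernelSequence i).τ₁ := hu.of_isIso _ (IsIso.id x)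
  exact ⟨hu.ses_trd (idZeroSequence_shortExact x) (cokernelSequence_shortExact i) _ hid,
    hu.ses_snd (idZeroSequence_shortExact x) (cokernelSequence_shortExact i) _ hid⟩

theorem sWeq_objectsOf_general {C : Type u} [Category.{v} C] [Abelian C]
    {w u : MorphismProperty C}
    (hfac : HasFactorizations w)
    (hu : AdmissibleClass u)
    (hwu : ∀ {x y : C} (f : x ⟶ y), w f → u f) :
    SWeq w (objectsOf u) = u := by
  ext x y f
  constructor
  · rintro ⟨v, i, p, hi, hp, rfl, hcoker⟩
    exact hu.comp_mem i p ((hu.mem_iff_cokernel_mem_objectsOf i).2 hcoker) (hwu p hp)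
  · intro hf
    obtain ⟨v, i, p, hi, hp, rfl⟩ := hfac f
    have hui : u i := hu.of_comp_left i p (hwu p hp) hf
    exact ⟨v, i, p, hi, hp, rfl, (hu.mem_iff_cokernel_mem_objectsOf i).1 hui⟩

theorem sWeq_objectsOf {C : Type u} [Category.{v} C] [Abelian C]
    {w u : MorphismProperty C} (hw : AdmissibleClass w)
    (hfac : HasFactorizations w)
    (hu : AdmissibleClass u)
    (hwu : ∀ {x y : C} (f : x ⟶ y), w f → u f) :
    SWeq w (objectsOf u) = u :=
  sWeq_objectsOf_general hfac hu hwu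
end

section
/- Assume (𝒞, w) satisfies the factorization axiom. Then the pair (F𝒞, lw) satisfies the factorization axiom: every morphism f : x → y of F𝒞 factors as f = p∘i where i : x → u is a monomorphism of F𝒞 (i.e. levelwise a monomorphism) and p : u → y is a level weak equivalence. -/
open CategoryTheory CategoryTheory.Limits ZeroObject

universe v u

variable {C : Type u} [Category.{v} C] [Abelian C]

/-- The class `lw` of level weak equivalences in the category `F𝒞 = ℕ ⥤ 𝒞` of
filtered objects: morphisms all of whose components lie in `w`. -/
def LevelWeq (w : MorphismProperty C) : MorphismProperty (ℕ ⥤ C) :=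
  fun _ _ f => ∀ n : ℕ, w (f.app n)

/-- The class `w_st` of stable weak equivalences in `F𝒞 = ℕ ⥤ 𝒞`: morphisms
whose components eventually lie in `w`. -/
def StableWeq (w : MorphismProperty C) : MorphismProperty (ℕ ⥤ C) :=
  fun _ _ f => ∃ N : ℕ, ∀ n : ℕ, N ≤ n → w (f.app n)

/-- A filtered object is *weakly bounded* if its transition maps eventually
lie in `w`. -/
def WeaklyBounded (w : MorphismProperty C) (x : ℕ ⥤ C) : Prop :=
  ∃ N : ℕ, ∀ n : ℕ, N ≤ n → w (x.map (homOfLE (Nat.le_succ n)))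

/-- A filtered object is *bounded* if its transition maps are eventually
isomorphisms. -/
def BoundedFiltered (x : ℕ ⥤ C) : Prop :=
  ∃ b : ℕ, ∀ n : ℕ, b ≤ n → IsIso (x.map (homOfLE (Nat.le_succ n)))

/-! Factor `f₀` first. Given a factorization `xₙ ↪ uₙ → yₙ`, push `xₙ ↪ uₙ` out along the
transition map `xₙ → xₙ₊₁`; the leg `xₙ₊₁ → P` is again a mono, and factoring the induced map
`P → yₙ₊₁` as a mono followed by a weak equivalence gives `uₙ₊₁`, with transition map
`uₙ → P → uₙ₊₁`. -/

namespace CategoryTheory.MorphismProperty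

variable {D : Type*} [Category* D] [HasPushouts D] {W₁ W₂ : MorphismProperty D}

namespace MapFactorizationData

variable {x y x' y' : D} {f : x ⟶ y} {f' : x' ⟶ y'} (d : MapFactorizationData W₁ W₂ f)
  (a : x ⟶ x') (b : y ⟶ y') (sq : a ≫ f' = f ≫ b)

noncomputable def pushoutDesc : pushout a d.i ⟶ y' :=
  pushout.desc f' (d.p ≫ b) (by simp [sq])

variable [W₁.IsStableUnderCobaseChange] [W₁.IsStableUnderComposition] [HasFactorization W₁ W₂]

noncomputable def extend : MapFactorizationData W₁ W₂ f' :=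
  let e := factorizationData W₁ W₂ (d.pushoutDesc a b sq)
  { Z := e.Z
    i := pushout.inl a d.i ≫ e.i
    p := e.p
    fac := by rw [Category.assoc, e.fac]; exact pushout.inl_desc _ _ _
    hi := W₁.comp_mem _ _ (W₁.of_isPushout (IsPushout.of_hasPushout a d.i) d.hi) e.hi
    hp := e.hp }

noncomputable def extendHom : d.Z ⟶ (d.extend a b sq).Z :=
  pushout.inr a d.i ≫ (factorizationData W₁ W₂ (d.pushoutDesc a b sq)).i

lemma i_extendHom : d.i ≫ d.extendHom a b sq = a ≫ (d.extend a b sq).i :=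
  (pushout.condition_assoc _).symm

lemma extendHom_p : d.extendHom a b sq ≫ (d.extend a b sq).p = d.p ≫ b := by
  simp only [extendHom, extend, Category.assoc, MapFactorizationData.fac]
  exact pushout.inr_desc _ _ _

end MapFactorizationData

variable [W₁.IsStableUnderCobaseChange] [W₁.IsStableUnderComposition] [HasFactorization W₁ W₂]

variable (W₁ W₂) in
noncomputable def factorizationDataSeq {x y : ℕ ⥤ D} (f : x ⟶ y) :
    (n : ℕ) → MapFactorizationData W₁ W₂ (f.app n)
  | 0 => factorizationData W₁ W₂ (f.app 0)
  | n + 1 => (factorizationDataSeq f n).extend (x.map (homOfLE n.le_succ))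
      (y.map (homOfLE n.le_succ)) (f.naturality _)

instance hasFactorization_functorCategory_nat :
    HasFactorization (W₁.functorCategory ℕ) (W₂.functorCategory ℕ) where
  nonempty_mapFactorizationData {x y} f := by
    let d := factorizationDataSeq W₁ W₂ f
    let t n : (d n).Z ⟶ (d (n + 1)).Z := (d n).extendHom _ _ (f.naturality _)
    exact ⟨{
      Z := Functor.ofSequence t
      i := NatTrans.ofSequence (fun n => (d n).i) fun n => by
        rw [Functor.ofSequence_map_homOfLE_succ]
        exact ((d n).i_extendHom _ _ _).symm
      p := NatTrans.ofSequence (fun n => (d n).p) fun n => by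
        rw [Functor.ofSequence_map_homOfLE_succ]
        exact (d n).extendHom_p _ _ _
      fac := by ext n; exact (d n).fac
      hi := fun n => (d n).hi
      hp := fun n => (d n).hp }⟩

end CategoryTheory.MorphismProperty

theorem levelWeq_factorizations_general {w : MorphismProperty C}
    (hfac : ∀ {x y : C} (f : x ⟶ y),
      ∃ (u : C) (i : x ⟶ u) (p : u ⟶ y), Mono i ∧ w p ∧ i ≫ p = f) :
    ∀ {x y : ℕ ⥤ C} (f : x ⟶ y),
      ∃ (u : ℕ ⥤ C) (i : x ⟶ u) (p : u ⟶ y),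
        Mono i ∧ LevelWeq w p ∧ i ≫ p = f := by
  have : (MorphismProperty.monomorphisms C).HasFactorization w := ⟨fun f => by
    obtain ⟨u, i, p, hi, hp, fac⟩ := hfac f
    exact ⟨{ Z := u, i := i, p := p, fac := fac, hi := hi, hp := hp }⟩⟩
  intro x y f
  let d := MorphismProperty.factorizationData
    ((MorphismProperty.monomorphisms C).functorCategory ℕ) (w.functorCategory ℕ) f
  have : ∀ n, Mono (d.i.app n) := d.hi
  exact ⟨d.Z, d.i, d.p, NatTrans.mono_of_mono_app d.i, d.hp, d.fac⟩

theorem levelWeq_factorizations {w : MorphismProperty C} (hw : AdmissibleClass w)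
    (hfac : ∀ {x y : C} (f : x ⟶ y),
      ∃ (u : C) (i : x ⟶ u) (p : u ⟶ y), Mono i ∧ w p ∧ i ≫ p = f) :
    ∀ {x y : ℕ ⥤ C} (f : x ⟶ y),
      ∃ (u : ℕ ⥤ C) (i : x ⟶ u) (p : u ⟶ y),
        Mono i ∧ LevelWeq w p ∧ i ≫ p = f :=
  levelWeq_factorizations_general hfac
end

section
/- Let u be an admissible class of morphisms of F𝒞 which contains the morphism θ_x for every filtered object x. Then for every filtered object x and every natural number N, the canonical morphism σ_{≥N}x → x lies in u. -/
open CategoryTheory CategoryTheory.Limits ZeroObject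

universe v u

variable {C : Type u} [Category.{v} C] [Abelian C]

/-- The shift `x[1]` of a filtered object: `(x[1])_k = x_{k+1}`. -/
def shiftOne (x : ℕ ⥤ C) : ℕ ⥤ C :=
  (Monotone.functor (f := fun n : ℕ => n + 1) fun _ _ h => Nat.succ_le_succ h) ⋙ x

/-- The morphism `θ_x : x ⟶ x[1]`, whose component at level `k` is the
transition map `i^x_k : x_k ⟶ x_{k+1}`. -/
def theta (x : ℕ ⥤ C) : x ⟶ shiftOne x where
  app k := x.map (homOfLE (Nat.le_succ k))
  naturality k m f := by
    dsimp [shiftOne, Monotone.functor]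
    rw [← x.map_comp, ← x.map_comp]
    exact congrArg x.map (Subsingleton.elim _ _)

/-- The truncation `σ_{≥N} x` of a filtered object: it is `0` in levels `< N`
and agrees with `x` (with the same transition maps) in levels `≥ N`. -/
noncomputable def sigmaGE (N : ℕ) (x : ℕ ⥤ C) : ℕ ⥤ C where
  obj k := if N ≤ k then x.obj k else 0
  map {k m} f :=
    if hk : N ≤ k then
      eqToHom (if_pos hk) ≫ x.map f ≫ eqToHom (if_pos (hk.trans (leOfHom f))).symm
    else 0
  map_id k := by
    by_cases hk : N ≤ k
    · simp [hk]
    · simp only [dif_neg hk]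
      have hz : IsZero (if N ≤ k then x.obj k else (0 : C)) := by
        rw [if_neg hk]; exact isZero_zero C
      exact hz.eq_of_src _ _
  map_comp {k m n} f g := by
    by_cases hk : N ≤ k
    · have hm : N ≤ m := hk.trans (leOfHom f)
      simp [dif_pos hk, dif_pos hm]
    · simp [dif_neg hk]

/-- The canonical morphism `σ_{≥N} x ⟶ x`: the identity in levels `≥ N`
and zero in levels `< N`. -/
noncomputable def sigmaGEToSelf (N : ℕ) (x : ℕ ⥤ C) : sigmaGE N x ⟶ x where
  app k := if hk : N ≤ k then eqToHom (if_pos hk) else 0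
  naturality k m f := by
    by_cases hk : N ≤ k
    · have hm : N ≤ m := hk.trans (leOfHom f)
      rw [dif_pos hk, dif_pos hm]
      simp [sigmaGE, dif_pos hk]
    · rw [dif_neg hk, zero_comp]
      simp [sigmaGE, dif_neg hk]
      rfl

/-!
The map `σ_{≥N} x ⟶ x` is a monomorphism whose cokernel `q` vanishes in levels `≥ N`. Comparing
`σ_{≥N} x ⟶ x ⟶ q` with `x = x ⟶ 0`, it suffices that `q ⟶ 0` lies in `u`. This follows by induction
on `N`: `q ⟶ 0` factors as `θ_q : q ⟶ q[1]` followed by `q[1] ⟶ 0`, and `q[1]` vanishes from level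
`N - 1` on.
-/

namespace AdmissibleClass

variable {D : Type*} [Category D] [Abelian D] {u : MorphismProperty D}

lemma mem_f_of_shortExact (hu : AdmissibleClass u) {S : ShortComplex D} (hS : S.ShortExact)
    (h₃ : u (0 : S.X₃ ⟶ 0)) : u S.f := by
  let T : ShortComplex D := ShortComplex.mk (𝟙 S.X₂) (0 : S.X₂ ⟶ 0) (by simp)
  have hT : T.ShortExact :=
    (ShortComplex.Splitting.ofIsIsoOfIsZero T (inferInstanceAs (IsIso (𝟙 S.X₂)))
      (isZero_zero D)).shortExact
  let φ : S ⟶ T :=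
    { τ₁ := S.f
      τ₂ := 𝟙 S.X₂
      τ₃ := 0
      comm₁₂ := by simp [T]
      comm₂₃ := by simp [T] }
  exact hu.ses_fst hS hT φ (hu.of_isIso _ inferInstance) h₃

end AdmissibleClass

lemma mem_toZero_of_isZero_obj {u : MorphismProperty (ℕ ⥤ C)} (hu : AdmissibleClass u)
    (hθ : ∀ x : ℕ ⥤ C, u (theta x)) (N : ℕ) (q : ℕ ⥤ C) (hq : ∀ k, N ≤ k → IsZero (q.obj k)) :
    u (0 : q ⟶ 0) := by
  induction N generalizing q with
  | zero =>
    have hz : IsZero q := Functor.isZero _ fun k => hq k k.zero_le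
    rw [hz.eq_of_src 0 hz.isoZero.hom]
    exact hu.of_isIso _ inferInstance
  | succ N ih =>
    have h := hu.comp_mem _ _ (hθ q) (ih (shiftOne q) fun k hk => hq (k + 1) (by omega))
    rwa [comp_zero] at h

lemma sigmaGEToSelf_app_of_le {N k : ℕ} (x : ℕ ⥤ C) (hk : N ≤ k) :
    (sigmaGEToSelf N x).app k = eqToHom (if_pos hk) := dif_pos hk

lemma isZero_sigmaGE_obj_of_lt {N k : ℕ} (x : ℕ ⥤ C) (hk : k < N) :
    IsZero ((sigmaGE N x).obj k) := by
  simpa [sigmaGE, Nat.not_le.2 hk] using isZero_zero C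

lemma isIso_sigmaGEToSelf_app {N k : ℕ} (x : ℕ ⥤ C) (hk : N ≤ k) :
    IsIso ((sigmaGEToSelf N x).app k) := by
  rw [sigmaGEToSelf_app_of_le x hk]
  exact (eqToIso (if_pos hk)).isIso_hom

instance mono_sigmaGEToSelf (N : ℕ) (x : ℕ ⥤ C) : Mono (sigmaGEToSelf N x) := by
  have (k : ℕ) : Mono ((sigmaGEToSelf N x).app k) := by
    rcases le_or_gt N k with hk | hk
    · have := isIso_sigmaGEToSelf_app x hk
      infer_instance
    · exact (isZero_sigmaGE_obj_of_lt x hk).mono _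
  exact NatTrans.mono_of_mono_app _

theorem sigmaGEToSelf_mem {u : MorphismProperty (ℕ ⥤ C)}
    (hu : AdmissibleClass u)
    (hθ : ∀ x : ℕ ⥤ C, u (theta x))
    (x : ℕ ⥤ C) (N : ℕ) :
    u (sigmaGEToSelf N x) := by
  let S := ShortComplex.cokernelSequence (sigmaGEToSelf N x)
  have hS : S.ShortExact :=
    .mk' (ShortComplex.cokernelSequence_exact _) (mono_sigmaGEToSelf N x) inferInstance
  refine hu.mem_f_of_shortExact hS (mem_toZero_of_isZero_obj hu hθ N _ fun k hk => ?_)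
  have hSk := hS.map_of_exact ((evaluation ℕ C).obj k)
  exact hSk.isIso_f_iff.1 (isIso_sigmaGEToSelf_app x hk)
end

section
/- Let u be a class of morphisms of F𝒞 between weakly bounded filtered objects such that: u contains all isomorphisms between weakly bounded objects; u satisfies two-out-of-three among morphisms between weakly bounded objects; u contains every level weak equivalence between weakly bounded objects; and u contains θ_x for every weakly bounded filtered object x. Then u contains every stable weak equivalence between weakly bounded filtered objects. Consequently, the restriction of w_st to F_wb𝒞 is the smallest admissible class of morphisms of F_wb𝒞 containing lw and all the morphisms θ_x. -/
/-!
A stable weak equivalence `f` is a level weak equivalence after finitely many shifts. Since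
`f ≫ θ_y = θ_x ≫ f[1]` and `u` contains the `θ`'s and is closed under two-out-of-three,
`f[1] ∈ u` implies `f ∈ u`; an induction on the level from which `f` lies in `w` reduces
everything to `lw ⊆ u`.
-/

open CategoryTheory CategoryTheory.Limits ZeroObject

universe v u

variable {C : Type u} [Category.{v} C] [Abelian C]

section

variable {C : Type*} [Category C]

/-- The morphism `f[1] : x[1] ⟶ y[1]` induced by `f : x ⟶ y`. -/
def shiftOneMap {x y : ℕ ⥤ C} (f : x ⟶ y) : shiftOne x ⟶ shiftOne y :=
  Functor.whiskerLeft _ f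

lemma theta_naturality {x y : ℕ ⥤ C} (f : x ⟶ y) :
    f ≫ theta y = theta x ≫ shiftOneMap f := by
  ext n
  exact (f.naturality (homOfLE (Nat.le_succ n))).symm

lemma WeaklyBounded.shiftOne {w : MorphismProperty C} {x : ℕ ⥤ C}
    (hx : WeaklyBounded w x) : WeaklyBounded w (shiftOne x) := by
  obtain ⟨N, hN⟩ := hx
  exact ⟨N, fun n hn => hN (n + 1) (by omega)⟩

lemma mem_of_mem_shiftOneMap {w : MorphismProperty C} (u : MorphismProperty (ℕ ⥤ C))
    (h_comp : ∀ {x y z : ℕ ⥤ C} (f : x ⟶ y) (g : y ⟶ z), WeaklyBounded w x →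
      WeaklyBounded w y → WeaklyBounded w z → u f → u g → u (f ≫ g))
    (h_left : ∀ {x y z : ℕ ⥤ C} (f : x ⟶ y) (g : y ⟶ z), WeaklyBounded w x →
      WeaklyBounded w y → WeaklyBounded w z → u g → u (f ≫ g) → u f)
    (h_theta : ∀ x : ℕ ⥤ C, WeaklyBounded w x → u (theta x))
    {x y : ℕ ⥤ C} (f : x ⟶ y) (hx : WeaklyBounded w x) (hy : WeaklyBounded w y)
    (hf : u (shiftOneMap f)) : u f := by
  have h_square : u (f ≫ theta y) := by
    rw [theta_naturality]
    exact h_comp _ _ hx hx.shiftOne hy.shiftOne (h_theta x hx) hf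
  exact h_left f (theta y) hx hy hy.shiftOne (h_theta y hy) h_square

end

theorem stableWeq_smallest_on_weaklyBounded_general {w : MorphismProperty C}
    (u : MorphismProperty (ℕ ⥤ C))
    (h_comp : ∀ {x y z : ℕ ⥤ C} (f : x ⟶ y) (g : y ⟶ z), WeaklyBounded w x →
      WeaklyBounded w y → WeaklyBounded w z → u f → u g → u (f ≫ g))
    (h_left : ∀ {x y z : ℕ ⥤ C} (f : x ⟶ y) (g : y ⟶ z), WeaklyBounded w x →
      WeaklyBounded w y → WeaklyBounded w z → u g → u (f ≫ g) → u f)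
    (h_lw : ∀ {x y : ℕ ⥤ C} (f : x ⟶ y), WeaklyBounded w x → WeaklyBounded w y →
      LevelWeq w f → u f)
    (h_theta : ∀ x : ℕ ⥤ C, WeaklyBounded w x → u (theta x)) :
    ∀ {x y : ℕ ⥤ C} (f : x ⟶ y), WeaklyBounded w x → WeaklyBounded w y →
      StableWeq w f → u f := by
  rintro x y f hx hy ⟨N, hN⟩
  induction N generalizing x y with
  | zero => exact h_lw f hx hy fun n => hN n n.zero_le
  | succ N ih =>
    refine mem_of_mem_shiftOneMap u h_comp h_left h_theta f hx hy ?_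
    exact ih (shiftOneMap f) hx.shiftOne hy.shiftOne fun n hn => hN (n + 1) (by omega)

theorem stableWeq_smallest_on_weaklyBounded {w : MorphismProperty C}
    (hw : AdmissibleClass w)
    (u : MorphismProperty (ℕ ⥤ C))
    (h_iso : ∀ {x y : ℕ ⥤ C} (f : x ⟶ y), WeaklyBounded w x → WeaklyBounded w y →
      IsIso f → u f)
    (h_comp : ∀ {x y z : ℕ ⥤ C} (f : x ⟶ y) (g : y ⟶ z), WeaklyBounded w x →
      WeaklyBounded w y → WeaklyBounded w z → u f → u g → u (f ≫ g))
    (h_left : ∀ {x y z : ℕ ⥤ C} (f : x ⟶ y) (g : y ⟶ z), WeaklyBounded w x →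
      WeaklyBounded w y → WeaklyBounded w z → u g → u (f ≫ g) → u f)
    (h_right : ∀ {x y z : ℕ ⥤ C} (f : x ⟶ y) (g : y ⟶ z), WeaklyBounded w x →
      WeaklyBounded w y → WeaklyBounded w z → u f → u (f ≫ g) → u g)
    (h_lw : ∀ {x y : ℕ ⥤ C} (f : x ⟶ y), WeaklyBounded w x → WeaklyBounded w y →
      LevelWeq w f → u f)
    (h_theta : ∀ x : ℕ ⥤ C, WeaklyBounded w x → u (theta x)) :
    ∀ {x y : ℕ ⥤ C} (f : x ⟶ y), WeaklyBounded w x → WeaklyBounded w y →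
      StableWeq w f → u f :=
  stableWeq_smallest_on_weaklyBounded_general u h_comp h_left h_lw h_theta
end

section
/- For every short exact sequence 0 → x → y → z → 0 in F𝒞 (i.e. a levelwise short exact sequence of filtered objects), if two of x, y, z are weakly bounded then so is the third. -/
open CategoryTheory CategoryTheory.Limits ZeroObject

universe v u

variable {C : Type u} [Category.{v} C] [Abelian C]

lemma levelSES (T : ShortComplex (ℕ ⥤ C)) (hT : T.ShortExact) (n : ℕ) :
    (T.map ((evaluation ℕ C).obj n)).ShortExact :=
  hT.map_of_exact _

/-- The morphism of level short exact sequences induced by transition maps. -/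
def levelPhi (T : ShortComplex (ℕ ⥤ C)) (n : ℕ) :
    T.map ((evaluation ℕ C).obj n) ⟶ T.map ((evaluation ℕ C).obj (n+1)) where
  τ₁ := T.X₁.map (homOfLE (Nat.le_succ n))
  τ₂ := T.X₂.map (homOfLE (Nat.le_succ n))
  τ₃ := T.X₃.map (homOfLE (Nat.le_succ n))
  comm₁₂ := T.f.naturality _
  comm₂₃ := T.g.naturality _

theorem weaklyBounded_two_of_three {w : MorphismProperty C} (hw : AdmissibleClass w)
    (T : ShortComplex (ℕ ⥤ C)) (hT : T.ShortExact) :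
    (WeaklyBounded w T.X₁ → WeaklyBounded w T.X₂ → WeaklyBounded w T.X₃) ∧
    (WeaklyBounded w T.X₁ → WeaklyBounded w T.X₃ → WeaklyBounded w T.X₂) ∧
    (WeaklyBounded w T.X₂ → WeaklyBounded w T.X₃ → WeaklyBounded w T.X₁) := by
  refine ⟨?_, ?_, ?_⟩ <;> rintro ⟨N₁, h₁⟩ ⟨N₂, h₂⟩ <;> refine ⟨max N₁ N₂, fun n hn => ?_⟩
  · exact hw.ses_trd (levelSES T hT n) (levelSES T hT (n+1)) (levelPhi T n)
      (h₁ n (le_trans (le_max_left _ _) hn)) (h₂ n (le_trans (le_max_right _ _) hn))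
  · exact hw.ses_snd (levelSES T hT n) (levelSES T hT (n+1)) (levelPhi T n)
      (h₁ n (le_trans (le_max_left _ _) hn)) (h₂ n (le_trans (le_max_right _ _) hn))
  · exact hw.ses_fst (levelSES T hT n) (levelSES T hT (n+1)) (levelPhi T n)
      (h₁ n (le_trans (le_max_left _ _) hn)) (h₂ n (le_trans (le_max_right _ _) hn))
end

section
/- Assume (𝒞, w) satisfies the factorization axiom. Let f : x → y be a morphism of F𝒞 such that x is bounded and y is weakly bounded. Then there exists a factorization f = p∘i where i : x → u is a monomorphism of F𝒞, p : u → y is a stable weak equivalence, and the filtered object u is bounded. -/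
open CategoryTheory CategoryTheory.Limits ZeroObject

universe v u

variable {C : Type u} [Category.{v} C] [Abelian C]

/-!
Pick `N` beyond which the transition maps of `x` are invertible and those of `y` lie in `w`,
and factor `f_N = p₀ ∘ i₀` with `i₀ : x_N ⟶ u₀` mono and `p₀ ∈ w`. The filtered object `u` that
agrees with `x` below `N` and is constantly `u₀` from `N` on is bounded. The map `x ⟶ u` is the
identity below `N` and `x_n ≅ x_N ⟶ u₀` from `N` on, hence mono; the map `u ⟶ y` is `f_n` below
`N` and `p₀` followed by `y_N ⟶ y_n` from `N` on, hence in `w` there.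
-/

lemma AdmissibleClass.isMultiplicative {w : MorphismProperty C} (hw : AdmissibleClass w) :
    w.IsMultiplicative where
  id_mem X := hw.of_isIso (𝟙 X) inferInstance
  comp_mem f g := hw.comp_mem f g

section

variable {D : Type*} [Category D]

lemma map_homOfLE_mem_of_le {W : MorphismProperty D} [W.IsMultiplicative] (x : ℕ ⥤ D) {N : ℕ}
    (hx : ∀ n, N ≤ n → W (x.map (homOfLE n.le_succ))) {n : ℕ} (hn : N ≤ n) :
    W (x.map (homOfLE hn)) := by
  induction n, hn using Nat.le_induction with
  | base => simpa only [homOfLE_refl, x.map_id] using W.id_mem _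
  | succ n hn ih =>
    rw [← homOfLE_comp hn n.le_succ, x.map_comp]
    exact W.comp_mem _ _ ih (hx n hn)

variable (x : ℕ ⥤ D) (N : ℕ) (c : D)

def replaceTailObj (n : ℕ) : D := if n < N then x.obj n else c

variable {N c}

lemma replaceTailObj_of_lt {n : ℕ} (h : n < N) : replaceTailObj x N c n = x.obj n := if_pos h

lemma replaceTailObj_of_le {n : ℕ} (h : N ≤ n) : replaceTailObj x N c n = c :=
  if_neg (not_lt.2 h)

variable {x} (g : x.obj N ⟶ c)

def replaceTailMap (n : ℕ) : replaceTailObj x N c n ⟶ replaceTailObj x N c (n + 1) :=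
  if h : n + 1 < N then
    eqToHom (replaceTailObj_of_lt x (by omega)) ≫ x.map (homOfLE n.le_succ) ≫
      eqToHom (replaceTailObj_of_lt x h).symm
  else if h' : n < N then
    eqToHom (replaceTailObj_of_lt x h') ≫ x.map (homOfLE h'.le) ≫ g ≫
      eqToHom (replaceTailObj_of_le x (not_lt.1 h)).symm
  else
    eqToHom ((replaceTailObj_of_le x (not_lt.1 h')).trans
      (replaceTailObj_of_le x (not_lt.1 h)).symm)

lemma replaceTailMap_of_le {n : ℕ} (hn : N ≤ n) :
    replaceTailMap g n = eqToHom ((replaceTailObj_of_le x hn).trans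
      (replaceTailObj_of_le x (by omega)).symm) := by
  rw [replaceTailMap, dif_neg (by omega), dif_neg (by omega)]

def replaceTail : ℕ ⥤ D := Functor.ofSequence (replaceTailMap g)

lemma replaceTail_map_succ (n : ℕ) :
    (replaceTail g).map (homOfLE n.le_succ) = replaceTailMap g n :=
  Functor.ofSequence_map_homOfLE_succ _ n

lemma isIso_replaceTail_map_succ {n : ℕ} (hn : N ≤ n) :
    IsIso ((replaceTail g).map (homOfLE n.le_succ)) := by
  have : IsIso (replaceTailMap g n) := by
    rw [replaceTailMap_of_le g hn]
    infer_instance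
  rwa [replaceTail_map_succ]

variable (hx : ∀ n (h : N ≤ n), IsIso (x.map (homOfLE h)))

noncomputable def toReplaceTailApp (n : ℕ) : x.obj n ⟶ replaceTailObj x N c n :=
  if h : n < N then eqToHom (replaceTailObj_of_lt x h).symm
  else
    haveI := hx n (not_lt.1 h)
    inv (x.map (homOfLE (not_lt.1 h))) ≫ g ≫ eqToHom (replaceTailObj_of_le x (not_lt.1 h)).symm

lemma toReplaceTailApp_naturality (n : ℕ) :
    x.map (homOfLE n.le_succ) ≫ toReplaceTailApp g hx (n + 1) =
      toReplaceTailApp g hx n ≫ replaceTailMap g n := by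
  by_cases h1 : n + 1 < N
  · simp [toReplaceTailApp, replaceTailMap, dif_pos h1, dif_pos (show n < N by omega)]
  by_cases h2 : n < N
  · obtain rfl : N = n + 1 := by omega
    have := hx (n + 1) le_rfl
    simp [toReplaceTailApp, replaceTailMap]
  · have := hx n (not_lt.1 h2)
    have := hx (n + 1) (not_lt.1 h1)
    have inv_eq : x.map (homOfLE n.le_succ) ≫ inv (x.map (homOfLE (not_lt.1 h1))) =
        inv (x.map (homOfLE (not_lt.1 h2))) := by
      rw [IsIso.comp_inv_eq, IsIso.eq_inv_comp, ← x.map_comp, homOfLE_comp]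
    simp only [toReplaceTailApp, replaceTailMap, dif_neg h1, dif_neg h2]
    rw [reassoc_of% inv_eq]
    simp

noncomputable def toReplaceTail : x ⟶ replaceTail g :=
  NatTrans.ofSequence (toReplaceTailApp g hx) fun n => by
    rw [replaceTail_map_succ]
    exact toReplaceTailApp_naturality g hx n

instance mono_toReplaceTail [Mono g] : Mono (toReplaceTail g hx) := by
  refine @NatTrans.mono_of_mono_app _ _ _ _ _ _ _ fun n => ?_
  change Mono (toReplaceTailApp g hx n)
  by_cases h : n < N
  · rw [toReplaceTailApp, dif_pos h]
    infer_instance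
  · have := hx n (not_lt.1 h)
    rw [toReplaceTailApp, dif_neg h]
    infer_instance

variable {y : ℕ ⥤ D} (f : x ⟶ y) (p₀ : c ⟶ y.obj N)

def fromReplaceTailApp (n : ℕ) : replaceTailObj x N c n ⟶ y.obj n :=
  if h : n < N then eqToHom (replaceTailObj_of_lt x h) ≫ f.app n
  else eqToHom (replaceTailObj_of_le x (not_lt.1 h)) ≫ p₀ ≫ y.map (homOfLE (not_lt.1 h))

lemma fromReplaceTailApp_naturality (hfp : g ≫ p₀ = f.app N) (n : ℕ) :
    replaceTailMap g n ≫ fromReplaceTailApp f p₀ (n + 1) =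
      fromReplaceTailApp f p₀ n ≫ y.map (homOfLE n.le_succ) := by
  by_cases h1 : n + 1 < N
  · simp [fromReplaceTailApp, replaceTailMap, dif_pos h1, dif_pos (show n < N by omega)]
  by_cases h2 : n < N
  · obtain rfl : N = n + 1 := by omega
    simp [fromReplaceTailApp, replaceTailMap, hfp]
  · simp only [fromReplaceTailApp, replaceTailMap, dif_neg h1, dif_neg h2]
    rw [← homOfLE_comp (not_lt.1 h2) n.le_succ, y.map_comp]
    simp

def fromReplaceTail (hfp : g ≫ p₀ = f.app N) : replaceTail g ⟶ y :=
  NatTrans.ofSequence (fromReplaceTailApp f p₀) fun n => by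
    rw [replaceTail_map_succ]
    exact fromReplaceTailApp_naturality g f p₀ hfp n

lemma fromReplaceTail_app_of_le (hfp : g ≫ p₀ = f.app N) {n : ℕ} (hn : N ≤ n) :
    (fromReplaceTail g f p₀ hfp).app n =
      eqToHom (replaceTailObj_of_le x hn) ≫ p₀ ≫ y.map (homOfLE hn) :=
  dif_neg (not_lt.2 hn)

lemma toReplaceTail_comp_fromReplaceTail (hfp : g ≫ p₀ = f.app N) :
    toReplaceTail g hx ≫ fromReplaceTail g f p₀ hfp = f := by
  ext n
  change toReplaceTailApp g hx n ≫ fromReplaceTailApp f p₀ n = f.app n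
  by_cases h : n < N
  · simp [toReplaceTailApp, fromReplaceTailApp, dif_pos h]
  · have := hx n (not_lt.1 h)
    simp [toReplaceTailApp, fromReplaceTailApp, dif_neg h, reassoc_of% hfp]

end

lemma stableWeq_fromReplaceTail {w : MorphismProperty C} (hw : AdmissibleClass w)
    {x y : ℕ ⥤ C} {N : ℕ} {c : C} (g : x.obj N ⟶ c) (f : x ⟶ y) {p₀ : c ⟶ y.obj N}
    (hfp : g ≫ p₀ = f.app N) (hp₀ : w p₀) (hy : ∀ n (h : N ≤ n), w (y.map (homOfLE h))) :
    StableWeq w (fromReplaceTail g f p₀ hfp) := by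
  refine ⟨N, fun n hn => ?_⟩
  rw [fromReplaceTail_app_of_le g f p₀ hfp hn]
  exact hw.comp_mem _ _ (hw.of_isIso _ (eqToIso (replaceTailObj_of_le x hn)).isIso_hom)
    (hw.comp_mem _ _ hp₀ (hy n hn))

theorem factorization_bounded {w : MorphismProperty C} (hw : AdmissibleClass w)
    (hfac : ∀ {a b : C} (f : a ⟶ b),
      ∃ (u : C) (i : a ⟶ u) (p : u ⟶ b), Mono i ∧ w p ∧ i ≫ p = f)
    {x y : ℕ ⥤ C} (f : x ⟶ y)
    (hx : BoundedFiltered x) (hy : WeaklyBounded w y) :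
    ∃ (u : ℕ ⥤ C) (i : x ⟶ u) (p : u ⟶ y),
      Mono i ∧ StableWeq w p ∧ i ≫ p = f ∧ BoundedFiltered u := by
  obtain ⟨b, hb⟩ := hx
  obtain ⟨M, hM⟩ := hy
  have := hw.isMultiplicative
  have hx : ∀ n (h : max b M ≤ n), IsIso (x.map (homOfLE h)) := fun n h =>
    map_homOfLE_mem_of_le (W := .isomorphisms C) x (fun k hk => hb k (le_of_max_le_left hk)) h
  have hy : ∀ n (h : max b M ≤ n), w (y.map (homOfLE h)) := fun n h =>
    map_homOfLE_mem_of_le y (fun k hk => hM k (le_of_max_le_right hk)) h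
  obtain ⟨u₀, i₀, p₀, hi₀, hp₀, hfp⟩ := hfac (f.app (max b M))
  exact ⟨replaceTail i₀, toReplaceTail i₀ hx, fromReplaceTail i₀ f p₀ hfp, inferInstance,
    stableWeq_fromReplaceTail hw i₀ f hfp hp₀ hy, toReplaceTail_comp_fromReplaceTail i₀ hx f p₀ hfp,
    max b M, fun n hn => isIso_replaceTail_map_succ i₀ hn⟩
end
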